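/- arXiv:2409.05565 — 4 statements merged into one kernel-verified Lean document; each statement's English description precedes it below -/
import Mathlib

section
/- Let n ≥ 1, let W be an n × n real matrix with entries w_{ij}, let λ > 0, and define T : (Fin n → ℝ) → (Fin n → ℝ) by (T A)_i = tanh(λ · Σ_{j=1}^{n} w_{ij} A_j). Then for all A, A' ∈ Fin n → ℝ, the Euclidean distances satisfy ‖T A - T A'‖₂ ≤ λ · ‖W‖_F · ‖A - A'‖₂, where ‖W‖_F = (Σ_{i=1}^{n} Σ_{j=1}^{n} w_{ij}²)^(1/2) is the Frobenius norm of W and ‖x‖₂ = (Σ_i x_i²)^(1/2). -/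
lemma real_hasDerivAt_tanh (x : ℝ) :
    HasDerivAt Real.tanh (1 / Real.cosh x ^ 2) x := by
  have h := (Real.hasDerivAt_sinh x).div (Real.hasDerivAt_cosh x) (Real.cosh_pos x).ne'
  have heq : (Real.cosh x * Real.cosh x - Real.sinh x * Real.sinh x) / Real.cosh x ^ 2
      = 1 / Real.cosh x ^ 2 := by
    rw [← sq, ← sq, Real.cosh_sq_sub_sinh_sq]
  have : Real.tanh = fun y => Real.sinh y / Real.cosh y := by
    funext y; exact Real.tanh_eq_sinh_div_cosh y
  rw [this]
  rw [heq] at h; exact h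

lemma tanh_lipschitz (a b : ℝ) : |Real.tanh a - Real.tanh b| ≤ |a - b| := by
  have key : ∀ x ∈ (Set.univ : Set ℝ), ‖deriv Real.tanh x‖ ≤ 1 := by
    intro x _
    rw [(real_hasDerivAt_tanh x).deriv]
    rw [Real.norm_eq_abs, abs_div, abs_one]
    rw [div_le_one (by positivity)]
    have h1 : (1:ℝ) ≤ Real.cosh x := Real.one_le_cosh x
    calc |Real.cosh x ^ 2| = Real.cosh x ^ 2 := abs_of_pos (by positivity)
      _ ≥ 1 := one_le_pow₀ h1
  have hd : ∀ x ∈ (Set.univ : Set ℝ), DifferentiableAt ℝ Real.tanh x :=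
    fun x _ => (real_hasDerivAt_tanh x).differentiableAt
  have := (convex_univ (𝕜 := ℝ) (E := ℝ)).norm_image_sub_le_of_norm_deriv_le
    (fun x hx => hd x hx) key (Set.mem_univ b) (Set.mem_univ a)
  simpa [Real.norm_eq_abs, one_mul] using this

theorem tanh_fggcm_contraction_estimate (n : ℕ) (hn : 1 ≤ n)
    (W : Matrix (Fin n) (Fin n) ℝ) (l : ℝ) (hl : 0 < l)
    (T : (Fin n → ℝ) → (Fin n → ℝ))
    (hT : ∀ (A : Fin n → ℝ) (i : Fin n), T A i = Real.tanh (l * ∑ j : Fin n, W i j * A j)) :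
    ∀ A A' : Fin n → ℝ,
      (∑ i : Fin n, (T A i - T A' i) ^ 2) ^ ((1 : ℝ) / 2) ≤
        l * (∑ i : Fin n, ∑ j : Fin n, (W i j) ^ 2) ^ ((1 : ℝ) / 2) *
          (∑ i : Fin n, (A i - A' i) ^ 2) ^ ((1 : ℝ) / 2) := by
  intro A A'
  set S := ∑ i : Fin n, (A i - A' i) ^ 2 with hS
  set F := ∑ i : Fin n, ∑ j : Fin n, (W i j) ^ 2 with hF
  have hSnn : 0 ≤ S := Finset.sum_nonneg fun i _ => sq_nonneg _
  have hFnn : 0 ≤ F := Finset.sum_nonneg fun i _ => Finset.sum_nonneg fun j _ => sq_nonneg _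
  have key : ∑ i : Fin n, (T A i - T A' i) ^ 2 ≤ l ^ 2 * F * S := by
    have : ∀ i : Fin n, (T A i - T A' i) ^ 2 ≤ l ^ 2 * (∑ j : Fin n, (W i j) ^ 2) * S := by
      intro i
      rw [hT, hT]
      have h1 : |Real.tanh (l * ∑ j : Fin n, W i j * A j)
          - Real.tanh (l * ∑ j : Fin n, W i j * A' j)|
          ≤ |l * ∑ j : Fin n, W i j * A j - l * ∑ j : Fin n, W i j * A' j| :=
        tanh_lipschitz _ _
      have h2 : (Real.tanh (l * ∑ j : Fin n, W i j * A j)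
          - Real.tanh (l * ∑ j : Fin n, W i j * A' j)) ^ 2
          ≤ (l * ∑ j : Fin n, W i j * A j - l * ∑ j : Fin n, W i j * A' j) ^ 2 := by
        rw [← sq_abs, ← sq_abs (l * _ - l * _)]
        exact pow_le_pow_left₀ (abs_nonneg _) h1 2
      refine h2.trans ?_
      have h3 : l * ∑ j : Fin n, W i j * A j - l * ∑ j : Fin n, W i j * A' j
          = l * ∑ j : Fin n, W i j * (A j - A' j) := by
        rw [← mul_sub, ← Finset.sum_sub_distrib]
        congr 1; apply Finset.sum_congr rfl; intro j _; ring
      rw [h3, mul_pow]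
      have hcs : (∑ j : Fin n, W i j * (A j - A' j)) ^ 2
          ≤ (∑ j : Fin n, (W i j) ^ 2) * S := by
        have := Finset.sum_mul_sq_le_sq_mul_sq Finset.univ (fun j => W i j)
          (fun j => A j - A' j)
        simpa [hS, sq] using this
      calc l ^ 2 * (∑ j : Fin n, W i j * (A j - A' j)) ^ 2
          ≤ l ^ 2 * ((∑ j : Fin n, (W i j) ^ 2) * S) := by
            exact mul_le_mul_of_nonneg_left hcs (sq_nonneg l)
        _ = l ^ 2 * (∑ j : Fin n, (W i j) ^ 2) * S := by ring
    calc ∑ i : Fin n, (T A i - T A' i) ^ 2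
        ≤ ∑ i : Fin n, l ^ 2 * (∑ j : Fin n, (W i j) ^ 2) * S :=
          Finset.sum_le_sum fun i _ => this i
      _ = l ^ 2 * F * S := by rw [← Finset.sum_mul, ← Finset.mul_sum]
  have hLnn : 0 ≤ ∑ i : Fin n, (T A i - T A' i) ^ 2 :=
    Finset.sum_nonneg fun i _ => sq_nonneg _
  rw [← Real.sqrt_eq_rpow, ← Real.sqrt_eq_rpow, ← Real.sqrt_eq_rpow]
  calc Real.sqrt (∑ i : Fin n, (T A i - T A' i) ^ 2)
      ≤ Real.sqrt (l ^ 2 * F * S) := Real.sqrt_le_sqrt key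
    _ = l * Real.sqrt F * Real.sqrt S := by
        rw [Real.sqrt_mul (by positivity), Real.sqrt_mul (sq_nonneg l),
          Real.sqrt_sq hl.le]
end

section
/- Let n ≥ 1, let W be an n × n real matrix with entries w_{ij}, let λ > 0, and suppose (Σ_{i=1}^{n} Σ_{j=1}^{n} w_{ij}²)^(1/2) < 1/λ. Define T : (Fin n → ℝ) → (Fin n → ℝ) by (T A)_i = tanh(λ · Σ_{j=1}^{n} w_{ij} A_j). Then the zero vector is the unique fixed point of T, and for every initial vector A^{(0)} ∈ Fin n → ℝ, the iterates A^{(t+1)} = T(A^{(t)}) converge to the zero vector as t → ∞. -/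
open Real Finset

private lemma tanh_hasDerivAt (x : ℝ) :
    HasDerivAt Real.tanh (1 / (Real.cosh x) ^ 2) x := by
  have h : HasDerivAt (fun x => Real.sinh x / Real.cosh x)
      ((Real.cosh x * Real.cosh x - Real.sinh x * Real.sinh x) / (Real.cosh x) ^ 2) x :=
    (Real.hasDerivAt_sinh x).div (Real.hasDerivAt_cosh x) (ne_of_gt (Real.cosh_pos x))
  have hc : Real.cosh x * Real.cosh x - Real.sinh x * Real.sinh x = 1 := by
    have := Real.cosh_sq_sub_sinh_sq x
    ring_nf
    ring_nf at this
    linarith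
  have : HasDerivAt (fun x => Real.sinh x / Real.cosh x) (1 / (Real.cosh x) ^ 2) x := by
    rwa [hc] at h
  exact this.congr_of_eventuallyEq (by filter_upwards with y using
    (Real.tanh_eq_sinh_div_cosh y))

private lemma abs_tanh_le (x : ℝ) : |Real.tanh x| ≤ |x| := by
  have hlip : LipschitzWith 1 Real.tanh := by
    apply lipschitzWith_of_nnnorm_deriv_le (fun y => (tanh_hasDerivAt y).differentiableAt)
    intro y
    have hd : deriv Real.tanh y = 1 / (Real.cosh y) ^ 2 := (tanh_hasDerivAt y).deriv
    rw [← NNReal.coe_le_coe, coe_nnnorm, hd, NNReal.coe_one, Real.norm_eq_abs]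
    have h1 : (1 : ℝ) ≤ Real.cosh y := Real.one_le_cosh y
    have h2 : (1 : ℝ) ≤ (Real.cosh y) ^ 2 := by nlinarith
    rw [abs_of_nonneg (by positivity)]
    rw [div_le_one (by positivity)]
    exact h2
  have := hlip.dist_le_mul x 0
  simpa [Real.tanh_zero, Real.dist_eq] using this

private lemma sqrt_pow_eq {c : ℝ} (hc : 0 ≤ c) : ∀ t : ℕ, Real.sqrt (c ^ t) = Real.sqrt c ^ t
  | 0 => by simp
  | t + 1 => by
    rw [pow_succ, Real.sqrt_mul (by positivity), sqrt_pow_eq hc t, pow_succ]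

theorem tanh_fggcm_converges_to_zero (n : ℕ) (hn : 1 ≤ n)
    (W : Matrix (Fin n) (Fin n) ℝ) (l : ℝ) (hl : 0 < l)
    (hW : (∑ i : Fin n, ∑ j : Fin n, (W i j) ^ 2) ^ ((1 : ℝ) / 2) < 1 / l)
    (T : (Fin n → ℝ) → (Fin n → ℝ))
    (hT : ∀ (A : Fin n → ℝ) (i : Fin n), T A i = Real.tanh (l * ∑ j : Fin n, W i j * A j)) :
    (T (fun _ => 0) = fun _ => 0) ∧
    (∀ A : Fin n → ℝ, T A = A → A = fun _ => 0) ∧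
    (∀ A₀ : Fin n → ℝ,
      Filter.Tendsto (fun t : ℕ => T^[t] A₀) Filter.atTop (nhds (fun _ => 0))) := by
  set F : ℝ := ∑ i : Fin n, ∑ j : Fin n, (W i j) ^ 2 with hF
  have hF0 : 0 ≤ F := Finset.sum_nonneg fun i _ => Finset.sum_nonneg fun j _ => sq_nonneg _
  have hsqrt : Real.sqrt F < 1 / l := by rwa [Real.sqrt_eq_rpow]
  have hFlt : F < (1 / l) ^ 2 := (Real.sqrt_lt' (by positivity)).mp hsqrt
  set c : ℝ := l ^ 2 * F with hc
  have hc0 : 0 ≤ c := by positivity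
  have hc1 : c < 1 := by
    have := mul_lt_mul_of_pos_left hFlt (show (0:ℝ) < l ^ 2 by positivity)
    calc c < l ^ 2 * (1 / l) ^ 2 := this
      _ = 1 := by field_simp
  -- key contraction estimate on sum of squares
  have hstep : ∀ A : Fin n → ℝ,
      (∑ i : Fin n, (T A i) ^ 2) ≤ c * ∑ j : Fin n, (A j) ^ 2 := by
    intro A
    have h1 : ∀ i : Fin n, (T A i) ^ 2 ≤ l ^ 2 * ((∑ j : Fin n, (W i j) ^ 2)
        * ∑ j : Fin n, (A j) ^ 2) := by
      intro i
      have ht : (T A i) ^ 2 ≤ (l * ∑ j : Fin n, W i j * A j) ^ 2 := by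
        rw [hT A i]
        have := abs_tanh_le (l * ∑ j : Fin n, W i j * A j)
        calc (Real.tanh (l * ∑ j : Fin n, W i j * A j)) ^ 2
            = |Real.tanh (l * ∑ j : Fin n, W i j * A j)| ^ 2 := (sq_abs _).symm
          _ ≤ |l * ∑ j : Fin n, W i j * A j| ^ 2 := by
              exact pow_le_pow_left₀ (abs_nonneg _) this 2
          _ = (l * ∑ j : Fin n, W i j * A j) ^ 2 := sq_abs _
      have hcs : (∑ j : Fin n, W i j * A j) ^ 2
          ≤ (∑ j : Fin n, (W i j) ^ 2) * ∑ j : Fin n, (A j) ^ 2 :=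
        Finset.sum_mul_sq_le_sq_mul_sq _ _ _
      calc (T A i) ^ 2 ≤ (l * ∑ j : Fin n, W i j * A j) ^ 2 := ht
        _ = l ^ 2 * (∑ j : Fin n, W i j * A j) ^ 2 := by ring
        _ ≤ l ^ 2 * ((∑ j : Fin n, (W i j) ^ 2) * ∑ j : Fin n, (A j) ^ 2) := by
            exact mul_le_mul_of_nonneg_left hcs (by positivity)
    calc (∑ i : Fin n, (T A i) ^ 2)
        ≤ ∑ i : Fin n, l ^ 2 * ((∑ j : Fin n, (W i j) ^ 2) * ∑ j : Fin n, (A j) ^ 2) :=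
          Finset.sum_le_sum fun i _ => h1 i
      _ = l ^ 2 * ((∑ i : Fin n, ∑ j : Fin n, (W i j) ^ 2) * ∑ j : Fin n, (A j) ^ 2) := by
          rw [← Finset.mul_sum, ← Finset.sum_mul]
      _ = c * ∑ j : Fin n, (A j) ^ 2 := by rw [hc]; ring
  -- fixed point at zero
  have hzero : T (fun _ => 0) = fun _ => 0 := by
    funext i
    rw [hT]
    simp
  refine ⟨hzero, ?_, ?_⟩
  · -- uniqueness
    intro A hA
    have hS : (∑ i : Fin n, (A i) ^ 2) ≤ c * ∑ j : Fin n, (A j) ^ 2 := by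
      have := hstep A
      rwa [hA] at this
    have hS0 : 0 ≤ ∑ i : Fin n, (A i) ^ 2 :=
      Finset.sum_nonneg fun i _ => sq_nonneg _
    have hSz : (∑ i : Fin n, (A i) ^ 2) = 0 := by nlinarith
    funext i
    have := (Finset.sum_eq_zero_iff_of_nonneg (fun j _ => sq_nonneg (A j))).mp hSz i
      (Finset.mem_univ i)
    exact pow_eq_zero_iff (by norm_num) |>.mp this
  · -- convergence
    intro A₀
    have hiter : ∀ t : ℕ,
        (∑ i : Fin n, (T^[t] A₀ i) ^ 2) ≤ c ^ t * ∑ i : Fin n, (A₀ i) ^ 2 := by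
      intro t
      induction t with
      | zero => simp
      | succ t ih =>
        rw [Function.iterate_succ_apply']
        calc (∑ i : Fin n, (T (T^[t] A₀) i) ^ 2)
            ≤ c * ∑ i : Fin n, (T^[t] A₀ i) ^ 2 := hstep _
          _ ≤ c * (c ^ t * ∑ i : Fin n, (A₀ i) ^ 2) :=
              mul_le_mul_of_nonneg_left ih hc0
          _ = c ^ (t + 1) * ∑ i : Fin n, (A₀ i) ^ 2 := by ring
    rw [tendsto_pi_nhds]
    intro i
    have hbound : ∀ t : ℕ, |T^[t] A₀ i| ≤
        Real.sqrt c ^ t * Real.sqrt (∑ j : Fin n, (A₀ j) ^ 2) := by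
      intro t
      have h1 : (T^[t] A₀ i) ^ 2 ≤ c ^ t * ∑ j : Fin n, (A₀ j) ^ 2 :=
        le_trans (Finset.single_le_sum (f := fun j => (T^[t] A₀ j) ^ 2)
          (fun j _ => sq_nonneg _) (Finset.mem_univ i)) (hiter t)
      calc |T^[t] A₀ i| = Real.sqrt ((T^[t] A₀ i) ^ 2) := (Real.sqrt_sq_eq_abs _).symm
        _ ≤ Real.sqrt (c ^ t * ∑ j : Fin n, (A₀ j) ^ 2) := Real.sqrt_le_sqrt h1
        _ = Real.sqrt c ^ t * Real.sqrt (∑ j : Fin n, (A₀ j) ^ 2) := by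
            rw [Real.sqrt_mul (by positivity), sqrt_pow_eq hc0]
    have hg : Filter.Tendsto
        (fun t : ℕ => Real.sqrt c ^ t * Real.sqrt (∑ j : Fin n, (A₀ j) ^ 2))
        Filter.atTop (nhds 0) := by
      have hsc : Real.sqrt c < 1 := by
        rw [show (1:ℝ) = Real.sqrt 1 by simp]
        exact Real.sqrt_lt_sqrt hc0 hc1
      simpa using (tendsto_pow_atTop_nhds_zero_of_lt_one (Real.sqrt_nonneg c) hsc).mul_const
        (Real.sqrt (∑ j : Fin n, (A₀ j) ^ 2))
    exact squeeze_zero_norm (fun t => by simpa using hbound t) hg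
end

section
/- Let n ≥ 1, let W be an n × n real matrix with entries w_{ij}, let λ > 0, and define S : (Fin n → ℝ) → (Fin n → ℝ) by (S A)_i = 1 / (1 + e^{-λ · Σ_{j=1}^{n} w_{ij} A_j}). Then for all A, A' ∈ Fin n → ℝ, the Euclidean distances satisfy ‖S A - S A'‖₂ ≤ (λ/4) · ‖W‖_F · ‖A - A'‖₂, where ‖W‖_F = (Σ_{i=1}^{n} Σ_{j=1}^{n} w_{ij}²)^(1/2) is the Frobenius norm of W and ‖x‖₂ = (Σ_i x_i²)^(1/2). -/
lemma sigmoid_deriv_bound :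
    ∀ x y : ℝ, |(1 + Real.exp (-x))⁻¹ - (1 + Real.exp (-y))⁻¹| ≤ (1/4) * |x - y| := by
  have hpos : ∀ x : ℝ, 0 < 1 + Real.exp (-x) := fun x => by positivity
  have hderiv : ∀ x : ℝ, HasDerivAt (fun t : ℝ => (1 + Real.exp (-t))⁻¹)
      (Real.exp (-x) / (1 + Real.exp (-x)) ^ 2) x := by
    intro x
    have h1 : HasDerivAt (fun t : ℝ => 1 + Real.exp (-t)) (-Real.exp (-x)) x := by
      have := (Real.hasDerivAt_exp (-x)).comp x (hasDerivAt_neg x)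
      simpa using (this.const_add 1)
    have := h1.inv (ne_of_gt (hpos x))
    simpa [neg_div, div_eq_mul_inv, Pi.inv_def] using this
  have hlip : LipschitzWith (1/4 : NNReal) (fun t : ℝ => (1 + Real.exp (-t))⁻¹) := by
    apply lipschitzWith_of_nnnorm_deriv_le
    · exact fun x => (hderiv x).differentiableAt
    · intro x
      rw [(hderiv x).deriv]
      have hb : Real.exp (-x) / (1 + Real.exp (-x)) ^ 2 ≤ 1/4 := by
        rw [div_le_iff₀ (by positivity)]
        nlinarith [sq_nonneg (1 - Real.exp (-x)), Real.exp_pos (-x)]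
      have hnn : 0 ≤ Real.exp (-x) / (1 + Real.exp (-x)) ^ 2 := by positivity
      simp only [← NNReal.coe_le_coe, coe_nnnorm, Real.norm_eq_abs, abs_of_nonneg hnn]
      simpa using hb
  intro x y
  have := hlip.dist_le_mul x y
  simpa [Real.dist_eq] using this

theorem sigmoid_fggcm_contraction_estimate (n : ℕ) (hn : 1 ≤ n)
    (W : Matrix (Fin n) (Fin n) ℝ) (l : ℝ) (hl : 0 < l)
    (S : (Fin n → ℝ) → (Fin n → ℝ))
    (hS : ∀ (A : Fin n → ℝ) (i : Fin n),
      S A i = 1 / (1 + Real.exp (-(l * ∑ j : Fin n, W i j * A j)))) :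
    ∀ A A' : Fin n → ℝ,
      (∑ i : Fin n, (S A i - S A' i) ^ 2) ^ ((1 : ℝ) / 2) ≤
        (l / 4) * (∑ i : Fin n, ∑ j : Fin n, (W i j) ^ 2) ^ ((1 : ℝ) / 2) *
          (∑ i : Fin n, (A i - A' i) ^ 2) ^ ((1 : ℝ) / 2) := by
  intro A A'
  set WS := ∑ i : Fin n, ∑ j : Fin n, (W i j) ^ 2 with hWS
  set AS := ∑ i : Fin n, (A i - A' i) ^ 2 with hAS
  have hWSnn : 0 ≤ WS := Finset.sum_nonneg fun i _ => Finset.sum_nonneg fun j _ => sq_nonneg _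
  have hASnn : 0 ≤ AS := Finset.sum_nonneg fun i _ => sq_nonneg _
  -- pointwise bound
  have key : ∀ i : Fin n, (S A i - S A' i) ^ 2 ≤
      (l/4)^2 * (∑ j : Fin n, (W i j)^2) * AS := by
    intro i
    have h1 : |S A i - S A' i| ≤
        (1/4) * |l * ∑ j : Fin n, W i j * A j - l * ∑ j : Fin n, W i j * A' j| := by
      rw [hS A i, hS A' i]
      simpa [one_div] using sigmoid_deriv_bound
        (l * ∑ j : Fin n, W i j * A j) (l * ∑ j : Fin n, W i j * A' j)
    have h2 : l * ∑ j : Fin n, W i j * A j - l * ∑ j : Fin n, W i j * A' j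
        = l * ∑ j : Fin n, W i j * (A j - A' j) := by
      rw [← mul_sub, ← Finset.sum_sub_distrib]
      ring_nf
    have hcs : (∑ j : Fin n, W i j * (A j - A' j)) ^ 2 ≤
        (∑ j : Fin n, (W i j)^2) * AS :=
      Finset.sum_mul_sq_le_sq_mul_sq _ _ _
    have hsq : (S A i - S A' i) ^ 2 ≤
        ((1/4) * |l * ∑ j : Fin n, W i j * A j - l * ∑ j : Fin n, W i j * A' j|)^2 := by
      have := sq_le_sq' (neg_le_of_abs_le h1 |>.trans_eq rfl |> fun h => h) (le_of_abs_le h1)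
      calc (S A i - S A' i) ^ 2 = |S A i - S A' i|^2 := (sq_abs _).symm
        _ ≤ _ := by
            apply pow_le_pow_left₀ (abs_nonneg _) h1
    calc (S A i - S A' i) ^ 2
        ≤ ((1/4) * |l * ∑ j : Fin n, W i j * A j - l * ∑ j : Fin n, W i j * A' j|)^2 := hsq
      _ = (1/4)^2 * l^2 * (∑ j : Fin n, W i j * (A j - A' j))^2 := by
          rw [h2, mul_pow, abs_mul, mul_pow, sq_abs, sq_abs]; ring
      _ ≤ (1/4)^2 * l^2 * ((∑ j : Fin n, (W i j)^2) * AS) := by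
          apply mul_le_mul_of_nonneg_left hcs (by positivity)
      _ = (l/4)^2 * (∑ j : Fin n, (W i j)^2) * AS := by ring
  have hsum : ∑ i : Fin n, (S A i - S A' i) ^ 2 ≤ (l/4)^2 * WS * AS := by
    calc ∑ i : Fin n, (S A i - S A' i) ^ 2
        ≤ ∑ i : Fin n, (l/4)^2 * (∑ j : Fin n, (W i j)^2) * AS :=
          Finset.sum_le_sum fun i _ => key i
      _ = (l/4)^2 * WS * AS := by rw [hWS, ← Finset.sum_mul, ← Finset.mul_sum]
  -- take square roots
  rw [← Real.sqrt_eq_rpow, ← Real.sqrt_eq_rpow, ← Real.sqrt_eq_rpow]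
  calc Real.sqrt (∑ i : Fin n, (S A i - S A' i) ^ 2)
      ≤ Real.sqrt ((l/4)^2 * WS * AS) := Real.sqrt_le_sqrt hsum
    _ = (l/4) * Real.sqrt WS * Real.sqrt AS := by
        rw [Real.sqrt_mul (by positivity), Real.sqrt_mul (sq_nonneg _),
          Real.sqrt_sq (by positivity)]
end

section
/- Let n ≥ 1, let W be an n × n real matrix with entries w_{ij}, let λ > 0, and suppose (Σ_{i=1}^{n} Σ_{j=1}^{n} w_{ij}²)^(1/2) < 4/λ. Define S : (Fin n → ℝ) → (Fin n → ℝ) by (S A)_i = 1 / (1 + e^{-λ · Σ_{j=1}^{n} w_{ij} A_j}). Then S has exactly one fixed point A* ∈ Fin n → ℝ, and for every initial vector A^{(0)}, the iterates A^{(t+1)} = S(A^{(t)}) converge to A* as t → ∞. -/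
open Real Finset
open scoped NNReal

private lemma sigmoid_hasDerivAt (x : ℝ) :
    HasDerivAt (fun x : ℝ => (1 + Real.exp (-x))⁻¹)
      (Real.exp (-x) / (1 + Real.exp (-x)) ^ 2) x := by
  have h1 : HasDerivAt (fun x : ℝ => Real.exp (-x)) (-Real.exp (-x)) x := by
    simpa using (hasDerivAt_neg x).exp
  have h2 : HasDerivAt (fun x : ℝ => 1 + Real.exp (-x)) (-Real.exp (-x)) x := by
    simpa using h1
  have hne : (1 + Real.exp (-x)) ≠ 0 := by positivity
  have := h2.inv hne
  exact this.congr_deriv (by ring)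

private lemma sigmoid_lipschitz :
    LipschitzWith (1/4 : ℝ≥0) (fun x : ℝ => (1 + Real.exp (-x))⁻¹) := by
  apply lipschitzWith_of_nnnorm_deriv_le
  · exact fun x => (sigmoid_hasDerivAt x).differentiableAt
  · intro x
    rw [(sigmoid_hasDerivAt x).deriv]
    rw [← NNReal.coe_le_coe]
    have he : 0 < Real.exp (-x) := Real.exp_pos _
    have h4 : Real.exp (-x) / (1 + Real.exp (-x)) ^ 2 ≤ 1/4 := by
      rw [div_le_iff₀ (by positivity)]
      nlinarith [sq_nonneg (1 - Real.exp (-x))]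
    have h0 : 0 ≤ Real.exp (-x) / (1 + Real.exp (-x)) ^ 2 := by positivity
    simpa [Real.norm_eq_abs, abs_of_nonneg h0] using h4

theorem sigmoid_fggcm_unique_fixed_point (n : ℕ) (hn : 1 ≤ n)
    (W : Matrix (Fin n) (Fin n) ℝ) (l : ℝ) (hl : 0 < l)
    (hW : (∑ i : Fin n, ∑ j : Fin n, (W i j) ^ 2) ^ ((1 : ℝ) / 2) < 4 / l)
    (S : (Fin n → ℝ) → (Fin n → ℝ))
    (hS : ∀ (A : Fin n → ℝ) (i : Fin n),
      S A i = 1 / (1 + Real.exp (-(l * ∑ j : Fin n, W i j * A j)))) :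
    ∃ A : Fin n → ℝ, S A = A ∧ (∀ B : Fin n → ℝ, S B = B → B = A) ∧
      (∀ A₀ : Fin n → ℝ,
        Filter.Tendsto (fun t : ℕ => S^[t] A₀) Filter.atTop (nhds A)) := by
  set Q : ℝ := ∑ i : Fin n, ∑ j : Fin n, (W i j) ^ 2 with hQ
  have hQ0 : 0 ≤ Q := Finset.sum_nonneg fun i _ => Finset.sum_nonneg fun j _ => sq_nonneg _
  set F : ℝ := Real.sqrt Q with hF
  have hF0 : 0 ≤ F := Real.sqrt_nonneg _
  have hFlt : F < 4 / l := by
    rwa [hF, Real.sqrt_eq_rpow]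
  -- the contraction constant
  set K : ℝ≥0 := Real.toNNReal (l * F / 4) with hK
  have hKcoe : (K : ℝ) = l * F / 4 := Real.coe_toNNReal _ (by positivity)
  have hK1 : K < 1 := by
    rw [← NNReal.coe_lt_coe, hKcoe, NNReal.coe_one, div_lt_one (by norm_num)]
    calc l * F < l * (4 / l) := by
          rcases eq_or_lt_of_le hF0 with h | h
          · rw [← h]; simp; positivity
          · exact (mul_lt_mul_iff_right₀ hl).2 hFlt
      _ = 4 := by field_simp
  -- view S as a map on Euclidean space
  let E := EuclideanSpace ℝ (Fin n)
  let T : E → E := fun A => WithLp.toLp 2 (S A)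
  -- per-coordinate Lipschitz bound
  have key : ∀ A B : E, ∀ i : Fin n,
      |S A i - S B i| ≤ l / 4 * |∑ j : Fin n, W i j * (A j - B j)| := by
    intro A B i
    have h1 : S A i = (1 + Real.exp (-(l * ∑ j : Fin n, W i j * A j)))⁻¹ := by
      rw [hS]; ring
    have h2 : S B i = (1 + Real.exp (-(l * ∑ j : Fin n, W i j * B j)))⁻¹ := by
      rw [hS]; ring
    have hlip := sigmoid_lipschitz.dist_le_mul
      (l * ∑ j : Fin n, W i j * A j) (l * ∑ j : Fin n, W i j * B j)
    rw [Real.dist_eq, Real.dist_eq] at hlip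
    rw [h1, h2]
    calc |_ - _| ≤ (1/4 : ℝ≥0) * |l * (∑ j : Fin n, W i j * A j)
          - l * (∑ j : Fin n, W i j * B j)| := hlip
      _ = l / 4 * |∑ j : Fin n, W i j * (A j - B j)| := by
          rw [← mul_sub, ← Finset.sum_sub_distrib]
          simp_rw [← mul_sub]
          rw [abs_mul, abs_of_pos hl]
          push_cast
          ring
  -- the contraction property
  have hcontr : ContractingWith K T := by
    refine ⟨hK1, LipschitzWith.of_dist_le_mul fun A B => ?_⟩
    have hd := EuclideanSpace.dist_eq A B
    rw [EuclideanSpace.dist_eq]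
    have hdnn : 0 ≤ dist A B := dist_nonneg
    have hsum : ∑ i : Fin n, dist (T A i) (T B i) ^ 2
        ≤ (l/4)^2 * Q * (dist A B)^2 := by
      have hstep : ∀ i : Fin n, dist (T A i) (T B i) ^ 2
          ≤ (l/4)^2 * (∑ j : Fin n, (W i j)^2) * (∑ j : Fin n, (A j - B j)^2) := by
        intro i
        have h1 : dist (T A i) (T B i) = |S A i - S B i| := Real.dist_eq _ _
        have h2 := key A B i
        have h3 : (∑ j : Fin n, W i j * (A j - B j))^2
            ≤ (∑ j : Fin n, (W i j)^2) * (∑ j : Fin n, (A j - B j)^2) :=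
          Finset.sum_mul_sq_le_sq_mul_sq _ _ _
        have h4 : dist (T A i) (T B i) ^ 2
            ≤ (l/4 * |∑ j : Fin n, W i j * (A j - B j)|)^2 := by
          rw [h1]
          exact pow_le_pow_left₀ (abs_nonneg _) h2 2
        calc dist (T A i) (T B i) ^ 2
            ≤ (l/4 * |∑ j : Fin n, W i j * (A j - B j)|)^2 := h4
          _ = (l/4)^2 * (∑ j : Fin n, W i j * (A j - B j))^2 := by
              rw [mul_pow, sq_abs]
          _ ≤ (l/4)^2 * ((∑ j : Fin n, (W i j)^2) * (∑ j : Fin n, (A j - B j)^2)) := by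
              apply mul_le_mul_of_nonneg_left h3 (by positivity)
          _ = (l/4)^2 * (∑ j : Fin n, (W i j)^2) * (∑ j : Fin n, (A j - B j)^2) := by ring
      have hdsq : (dist A B)^2 = ∑ j : Fin n, (A j - B j)^2 := by
        rw [hd, Real.sq_sqrt (Finset.sum_nonneg fun j _ => sq_nonneg _)]
        congr 1
        ext j
        rw [Real.dist_eq, sq_abs]
      calc ∑ i : Fin n, dist (T A i) (T B i) ^ 2
          ≤ ∑ i : Fin n, (l/4)^2 * (∑ j : Fin n, (W i j)^2) * (∑ j : Fin n, (A j - B j)^2) :=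
            Finset.sum_le_sum fun i _ => hstep i
        _ = (l/4)^2 * Q * (∑ j : Fin n, (A j - B j)^2) := by
            rw [← Finset.sum_mul, ← Finset.mul_sum, hQ]
        _ = (l/4)^2 * Q * (dist A B)^2 := by rw [hdsq]
    calc Real.sqrt (∑ i : Fin n, dist (T A i) (T B i) ^ 2)
        ≤ Real.sqrt ((l/4)^2 * Q * (dist A B)^2) := Real.sqrt_le_sqrt hsum
      _ = (l/4) * F * dist A B := by
          rw [show (l/4)^2 * Q * (dist A B)^2 = (l/4 * dist A B)^2 * Q by ring,
            Real.sqrt_mul (by positivity), Real.sqrt_sq (by positivity), ← hF]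
          ring
      _ = (K : ℝ) * dist A B := by rw [hKcoe]; ring
  -- apply the Banach fixed point theorem
  have : Nonempty E := ⟨WithLp.toLp 2 (fun _ => 0)⟩
  let A := hcontr.fixedPoint
  refine ⟨A, ?_, ?_, ?_⟩
  · exact congrArg WithLp.ofLp hcontr.fixedPoint_isFixedPt
  · intro B hB
    have hB' : Function.IsFixedPt T (WithLp.toLp 2 B) := congrArg (WithLp.toLp 2) hB
    exact congrArg WithLp.ofLp (hcontr.fixedPoint_unique hB')
  · intro A₀
    have h := hcontr.tendsto_iterate_fixedPoint (WithLp.toLp 2 A₀ : E)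
    have hit : ∀ t : ℕ, S^[t] A₀ = WithLp.ofLp (T^[t] (WithLp.toLp 2 A₀)) := by
      intro t
      induction t with
      | zero => rfl
      | succ k ih => rw [Function.iterate_succ_apply', Function.iterate_succ_apply', ih]
    simp_rw [hit]
    have hcont : Continuous (PiLp.continuousLinearEquiv 2 ℝ (fun _ : Fin n => ℝ)) :=
      (PiLp.continuousLinearEquiv 2 ℝ (fun _ : Fin n => ℝ)).continuous
    exact (hcont.tendsto A).comp h
end
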